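/- arXiv:2112.05198 — 5 statements merged into one kernel-verified Lean document; each statement's English description precedes it below -/
import Mathlib

section
/- Let S and A be nonempty finite sets and let p be a transition kernel as defined. Let k_n = T_p^n(0) denote the iterates of the budget operator started from the identically-zero function, and let k_∞(s,a) = sup_{n∈ℕ} k_n(s,a). Let k_*(s,a) denote the minimal budget. Then k_∞(s,a) = k_*(s,a) for every (s,a) ∈ S × A. -/
open scoped Classical ENNReal

variable {S A : Type*}

/-- The budget operator `T_p` associated with a transition kernel
`p : S → A → PMF (S × Bool)` (second component = binary damage indicator):
`(T_p k)(s,a) = max_{s' : p(s'|s,a) > 0} [ 1{p(s',1|s,a) > 0} + min_{a'} k(s',a') ]`,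
where `p(s'|s,a) = p(s',0|s,a) + p(s',1|s,a)`. -/
noncomputable def budgetOp [Fintype S] [Fintype A] (p : S → A → PMF (S × Bool))
    (k : S → A → ℕ∞) : S → A → ℕ∞ := fun s a =>
  (Finset.univ.filter fun s' : S => 0 < p s a (s', false) + p s a (s', true)).sup
    fun s' => (if 0 < p s a (s', true) then 1 else 0) + Finset.univ.inf fun a' => k s' a'

/-- Probability, under the Markov chain started at `(s,a)` and thereafter governed by the
stationary deterministic policy `π`, that the trajectory starts with the given finite
prefix of `(state, damage)` pairs. -/
noncomputable def pathProb (p : S → A → PMF (S × Bool)) (π : S → A) :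
    S → A → List (S × Bool) → ℝ≥0∞
  | _, _, [] => 1
  | s, a, x :: xs => p s a x * pathProb p π x.1 (π x.1) xs

/-- Total damage accumulated along a finite trajectory prefix. -/
def pathDamage : List (S × Bool) → ℕ := fun l => (l.map fun x => if x.2 then 1 else 0).sum

/-- `SafeAS p π s a k` states that, with probability one under the trajectory law
`P_{s,a,π}` (which exists by Ionescu–Tulcea), the total damage `D = Σ_{t≥1} d_t` satisfies
`D ≤ k`.  Since the state space is finite, this is equivalent to: every finite trajectory
prefix occurring with positive probability has accumulated damage at most `k`, which is how
we encode it (this Mathlib version does not provide the Ionescu–Tulcea construction). -/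
def SafeAS (p : S → A → PMF (S × Bool)) (π : S → A) (s : S) (a : A) (k : ℕ∞) : Prop :=
  ∀ l : List (S × Bool), pathProb p π s a l ≠ 0 → (pathDamage l : ℕ∞) ≤ k

/-- The minimal budget `k_*(s,a)`: the least `k ∈ ℕ ∪ {∞}` for which some stationary
deterministic policy keeps total damage `≤ k` with probability one from `(s,a)`. -/
noncomputable def minBudget (p : S → A → PMF (S × Bool)) (s : S) (a : A) : ℕ∞ :=
  sInf {k : ℕ∞ | ∃ π : S → A, SafeAS p π s a k}

section AuxLemmas
set_option linter.unusedSectionVars false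

variable [Fintype S] [Nonempty S] [Fintype A] [Nonempty A]

private lemma budgetOp_mono (p : S → A → PMF (S × Bool)) {k k' : S → A → ℕ∞}
    (h : ∀ s a, k s a ≤ k' s a) : ∀ s a, budgetOp p k s a ≤ budgetOp p k' s a := by
  intro s a
  refine Finset.sup_mono_fun fun s' _ => add_le_add_right ?_ _
  exact Finset.inf_mono_fun fun a' _ => h s' a'

private lemma iter_mono (p : S → A → PMF (S × Bool)) (n : ℕ) :
    ∀ s a, (budgetOp p)^[n] (fun _ _ => 0) s a ≤ (budgetOp p)^[n + 1] (fun _ _ => 0) s a := by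
  induction n with
  | zero => intro s a; exact zero_le
  | succ n ih =>
      intro s a
      rw [Function.iterate_succ_apply', Function.iterate_succ_apply']
      exact budgetOp_mono p ih s a

/-- Soundness: every iterate is a lower bound on any almost-surely safe budget. -/
private lemma iterate_le_of_safe (p : S → A → PMF (S × Bool)) (π : S → A) :
    ∀ (n : ℕ) (s : S) (a : A) (k : ℕ∞), SafeAS p π s a k →
      (budgetOp p)^[n] (fun _ _ => 0) s a ≤ k := by
  intro n
  induction n with
  | zero => intro s a k _; exact zero_le
  | succ n ih =>
      intro s a k hsafe
      rw [Function.iterate_succ_apply']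
      refine Finset.sup_le fun s' hs' => ?_
      rw [Finset.mem_filter] at hs'
      set c : ℕ∞ := if 0 < p s a (s', true) then 1 else 0 with hc
      obtain ⟨b, hb, hbc⟩ : ∃ b : Bool, p s a (s', b) ≠ 0 ∧ c ≤ (if b then 1 else 0 : ℕ∞) := by
        by_cases ht : 0 < p s a (s', true)
        · exact ⟨true, ht.ne', by simp [hc, ht]⟩
        · have ht0 : p s a (s', true) = 0 := by simpa [pos_iff_ne_zero] using ht
          have hf : p s a (s', false) ≠ 0 := by
            intro hf0
            have := hs'.2
            rw [hf0, ht0, add_zero] at this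
            exact lt_irrefl _ this
          exact ⟨false, hf, by simp [hc, ht]⟩
      have hdmg : ∀ l : List (S × Bool), pathProb p π s' (π s') l ≠ 0 →
          ((if b then 1 else 0 : ℕ∞) + (pathDamage l : ℕ∞)) ≤ k := by
        intro l hl
        have hcons : pathProb p π s a ((s', b) :: l) ≠ 0 := by
          show p s a (s', b) * pathProb p π s' (π s') l ≠ 0
          exact mul_ne_zero hb hl
        have := hsafe ((s', b) :: l) hcons
        have hdam : (pathDamage ((s', b) :: l) : ℕ∞)
            = (if b then 1 else 0 : ℕ∞) + (pathDamage l : ℕ∞) := by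
          cases b <;> simp [pathDamage]
        rwa [hdam] at this
      have hck : c ≤ k := by
        have h := hdmg [] (by simp [pathProb])
        simp only [pathDamage, List.map_nil, List.sum_nil, Nat.cast_zero, add_zero] at h
        exact hbc.trans h
      have hsafe' : SafeAS p π s' (π s') (k - c) := by
        intro l hl
        have h1 : c + (pathDamage l : ℕ∞) ≤ k :=
          le_trans (add_le_add_left hbc _) (hdmg l hl)
        have hct : c ≠ ⊤ := by rw [hc]; split <;> simp
        exact ENat.le_sub_of_add_le_left hct h1
      have h2 : (Finset.univ.inf fun a' => (budgetOp p)^[n] (fun _ _ => 0) s' a') ≤ k - c :=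
        le_trans (Finset.inf_le (Finset.mem_univ (π s'))) (ih s' (π s') (k - c) hsafe')
      calc c + (Finset.univ.inf fun a' => (budgetOp p)^[n] (fun _ _ => 0) s' a')
          ≤ c + (k - c) := add_le_add_right h2 _
        _ = k := add_tsub_cancel_of_le hck

private lemma le_budgetOp (p : S → A → PMF (S × Bool)) (k : S → A → ℕ∞) (s : S) (a : A)
    {s' : S}
    (h : s' ∈ Finset.univ.filter fun s'' : S => 0 < p s a (s'', false) + p s a (s'', true)) :
    ((if 0 < p s a (s', true) then 1 else 0 : ℕ∞) + Finset.univ.inf fun a' => k s' a')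
      ≤ budgetOp p k s a := by
  exact Finset.le_sup
    (f := fun s'' => (if 0 < p s a (s'', true) then 1 else 0)
      + Finset.univ.inf fun a' => k s'' a') h

private lemma finset_inf_iSup_le {f : ℕ → A → ℕ∞} (hf : ∀ a, Monotone fun n => f n a) :
    (Finset.univ.inf fun a : A => ⨆ n, f n a) ≤ ⨆ n, Finset.univ.inf (f n) := by
  by_contra h
  push_neg at h
  set x := ⨆ n, Finset.univ.inf (f n) with hx
  have hxtop : x < ⊤ := lt_of_lt_of_le h le_top
  have hchoice : ∀ a : A, ∃ n, x < f n a := by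
    intro a
    have : x < ⨆ n, f n a := lt_of_lt_of_le h (Finset.inf_le (Finset.mem_univ a))
    exact lt_iSup_iff.mp this
  choose N hN using hchoice
  have hlt : x < Finset.univ.inf (f (Finset.univ.sup N)) := by
    rw [Finset.lt_inf_iff hxtop]
    intro a _
    exact lt_of_lt_of_le (hN a) (hf a (Finset.le_sup (Finset.mem_univ a)))
  exact lt_irrefl x (hlt.trans_le (le_iSup (fun n => Finset.univ.inf (f n)) _))

/-- The pointwise supremum of the iterates is a pre-fixed point of the budget operator. -/
private lemma budgetOp_iSup_le (p : S → A → PMF (S × Bool)) (s : S) (a : A) :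
    budgetOp p (fun s a => ⨆ n, (budgetOp p)^[n] (fun _ _ => 0) s a) s a
      ≤ ⨆ n, (budgetOp p)^[n] (fun _ _ => 0) s a := by
  refine Finset.sup_le fun s' hs' => ?_
  set c : ℕ∞ := if 0 < p s a (s', true) then 1 else 0 with hc
  have hmono : ∀ a' : A, Monotone fun n => (budgetOp p)^[n] (fun _ _ => 0) s' a' :=
    fun a' => monotone_nat_of_le_succ fun n => iter_mono p n s' a'
  have hstep : ∀ n : ℕ, c + (Finset.univ.inf fun a' => (budgetOp p)^[n] (fun _ _ => 0) s' a')
      ≤ (budgetOp p)^[n + 1] (fun _ _ => 0) s a := by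
    intro n
    rw [Function.iterate_succ_apply']
    exact le_budgetOp p _ s a hs'
  calc c + (Finset.univ.inf fun a' => ⨆ n, (budgetOp p)^[n] (fun _ _ => 0) s' a')
      ≤ c + ⨆ n, Finset.univ.inf fun a' => (budgetOp p)^[n] (fun _ _ => 0) s' a' :=
        add_le_add_right (finset_inf_iSup_le hmono) _
    _ = ⨆ n, (c + Finset.univ.inf fun a' => (budgetOp p)^[n] (fun _ _ => 0) s' a') :=
        ENat.add_iSup _
    _ ≤ ⨆ n, (budgetOp p)^[n + 1] (fun _ _ => 0) s a := iSup_mono hstep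
    _ ≤ ⨆ n, (budgetOp p)^[n] (fun _ _ => 0) s a :=
        iSup_le fun n => le_iSup (fun m => (budgetOp p)^[m] (fun _ _ => 0) s a) (n + 1)

/-- Completeness: a greedy policy with respect to the supremum of the iterates is safe
with budget equal to that supremum. -/
private lemma exists_safe (p : S → A → PMF (S × Bool)) :
    ∃ π : S → A, ∀ s a, SafeAS p π s a (⨆ n, (budgetOp p)^[n] (fun _ _ => 0) s a) := by
  set K : S → A → ℕ∞ := fun s a => ⨆ n, (budgetOp p)^[n] (fun _ _ => 0) s a with hK
  have hπ : ∀ s' : S, ∃ a' : A, (Finset.univ.inf fun a' => K s' a') = K s' a' := by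
    intro s'
    obtain ⟨a', _, h⟩ := Finset.exists_mem_eq_inf Finset.univ Finset.univ_nonempty
      (fun a' => K s' a')
    exact ⟨a', h⟩
  choose π hπ using hπ
  refine ⟨π, ?_⟩
  have key : ∀ l (s : S) (a : A), pathProb p π s a l ≠ 0 → (pathDamage l : ℕ∞) ≤ K s a := by
    intro l
    induction l with
    | nil => intro s a _; simp [pathDamage]
    | cons x xs ih =>
        intro s a hl
        obtain ⟨s', b⟩ := x
        have hl' : p s a (s', b) ≠ 0 ∧ pathProb p π s' (π s') xs ≠ 0 := by
          have : p s a (s', b) * pathProb p π s' (π s') xs ≠ 0 := hl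
          exact mul_ne_zero_iff.mp this
        set c : ℕ∞ := if 0 < p s a (s', true) then 1 else 0 with hc
        have hd : (if b then 1 else 0 : ℕ∞) ≤ c := by
          cases b
          · exact zero_le
          · have : 0 < p s a (s', true) := pos_iff_ne_zero.mpr hl'.1
            simp [hc, this]
        have hmem : s' ∈ Finset.univ.filter
            fun s'' : S => 0 < p s a (s'', false) + p s a (s'', true) := by
          rw [Finset.mem_filter]
          refine ⟨Finset.mem_univ _, pos_iff_ne_zero.mpr ?_⟩
          intro h0
          rcases add_eq_zero.mp h0 with ⟨h1, h2⟩
          cases b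
          · exact hl'.1 h1
          · exact hl'.1 h2
        have hdam : (pathDamage ((s', b) :: xs) : ℕ∞)
            = (if b then 1 else 0 : ℕ∞) + (pathDamage xs : ℕ∞) := by
          cases b <;> simp [pathDamage]
        rw [hdam]
        have h1 : (pathDamage xs : ℕ∞) ≤ K s' (π s') := ih s' (π s') hl'.2
        calc (if b then 1 else 0 : ℕ∞) + (pathDamage xs : ℕ∞)
            ≤ c + K s' (π s') := add_le_add hd h1
          _ = c + Finset.univ.inf fun a' => K s' a' := by rw [hπ s']
          _ ≤ budgetOp p K s a := le_budgetOp p K s a hmem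
          _ ≤ K s a := budgetOp_iSup_le p s a
  exact fun s a => fun l hl => key l s a hl

end AuxLemmas

/-- the iterates `k_n = T_p^n(0)` of the budget operator started from the
zero function satisfy `sup_n k_n(s,a) = k_*(s,a)` for every `(s,a)`. -/
theorem budget_iteration_converges_to_minBudget
    [Fintype S] [Nonempty S] [Fintype A] [Nonempty A]
    (p : S → A → PMF (S × Bool)) (s : S) (a : A) :
    (⨆ n : ℕ, (budgetOp p)^[n] (fun _ _ => 0) s a) = minBudget p s a := by
  refine le_antisymm ?_ ?_
  · refine le_sInf fun k hk => ?_
    obtain ⟨π, hπ⟩ := hk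
    exact iSup_le fun n => iterate_le_of_safe p π n s a k hπ
  · obtain ⟨π, hπ⟩ := exists_safe p
    exact sInf_le ⟨π, hπ s a⟩
end

section
/- Let S and A be nonempty finite sets and let p be a transition kernel as defined, with minimal budget k_*. Then for every (s,a) ∈ S × A the minimal budget satisfies the Bellman-like recursion k_*(s,a) = max over s' with p(s'|s,a) > 0 of [1{p(s',1|s,a) > 0} + min_{a' ∈ A} k_*(s',a')]; equivalently, T_p k_* = k_*. -/
open scoped Classical ENNReal

variable {S A : Type*}

/-!
An optimal policy from `(s,a)`, followed after a possible first transition `(s',d)`, is a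
policy from `(s', π s')` with budget `k_*(s,a) - d`; minimising over the action at `s'`
gives `T_p k_* ≤ k_*`. Conversely, the greedy policy that plays an action minimising
`k_*(s',·)` at every state keeps the damage of every positive-probability prefix from `(s,a)`
below `(T_p k_*)(s,a)`: by induction on the prefix, using `T_p k_* ≤ k_*` at the next state.
-/

section
variable (p : S → A → PMF (S × Bool))

lemma pathDamage_cons (x : S × Bool) (l : List (S × Bool)) :
    (pathDamage (x :: l) : ℕ∞) = (if x.2 then 1 else 0) + pathDamage l := by
  rcases x with ⟨_, _ | _⟩ <;> simp [pathDamage]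

variable {p} in
lemma pathProb_cons_ne_zero {π : S → A} {s : S} {a : A} {x : S × Bool} {l : List (S × Bool)} :
    pathProb p π s a (x :: l) ≠ 0 ↔ p s a x ≠ 0 ∧ pathProb p π x.1 (π x.1) l ≠ 0 :=
  mul_ne_zero_iff

namespace SafeAS
variable {p} {π : S → A} {s : S} {a : A} {k : ℕ∞} {x : S × Bool}

lemma damage_le (h : SafeAS p π s a k) (hx : p s a x ≠ 0) : (if x.2 then 1 else 0) ≤ k := by
  simpa [pathDamage_cons, pathDamage] using h [x] (by simpa [pathProb] using hx)

lemma tail (h : SafeAS p π s a k) (hx : p s a x ≠ 0) :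
    SafeAS p π x.1 (π x.1) (k - if x.2 then 1 else 0) := fun l hl =>
  ENat.le_sub_of_add_le_left (by split <;> simp) <| by
    simpa [pathDamage_cons] using h (x :: l) (pathProb_cons_ne_zero.2 ⟨hx, hl⟩)

end SafeAS

lemma minBudget_le_of_safeAS {π : S → A} {s : S} {a : A} {k : ℕ∞} (h : SafeAS p π s a k) :
    minBudget p s a ≤ k :=
  sInf_le ⟨π, h⟩

lemma exists_safeAS_minBudget [Nonempty A] (s : S) (a : A) :
    ∃ π : S → A, SafeAS p π s a (minBudget p s a) :=
  csInf_mem (⟨⊤, fun _ => Classical.arbitrary A, fun _ _ => le_top⟩ :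
    {k : ℕ∞ | ∃ π : S → A, SafeAS p π s a k}.Nonempty)

lemma exists_policy_minBudget_eq_inf [Fintype A] [Nonempty A] :
    ∃ π : S → A, ∀ s, minBudget p s (π s) = Finset.univ.inf (minBudget p s) := by
  choose π hπ using fun s : S =>
    Finset.exists_mem_eq_inf Finset.univ Finset.univ_nonempty (minBudget p s)
  exact ⟨π, fun s => (hπ s).2.symm⟩

lemma budgetOp_le_iff [Fintype S] [Fintype A] (k : S → A → ℕ∞) (s : S) (a : A) (c : ℕ∞) :
    budgetOp p k s a ≤ c ↔
      ∀ x, p s a x ≠ 0 → (if x.2 then 1 else 0) + Finset.univ.inf (k x.1) ≤ c := by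
  refine ⟨fun h ⟨s', d⟩ hx => le_trans ?_ h, fun h => Finset.sup_le fun s' hs' => ?_⟩
  · have hs' : 0 < p s a (s', false) + p s a (s', true) := by
      cases d
      · exact (pos_iff_ne_zero.2 hx).trans_le le_self_add
      · exact (pos_iff_ne_zero.2 hx).trans_le le_add_self
    refine le_trans ?_ (Finset.le_sup (Finset.mem_filter.2 ⟨Finset.mem_univ s', hs'⟩))
    gcongr
    cases d
    · simp
    · simp [pos_iff_ne_zero.2 hx]
  · by_cases htrue : 0 < p s a (s', true)
    · simpa [htrue] using h (s', true) htrue.ne'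
    · have hfalse : p s a (s', false) ≠ 0 := by
        have hs' := (Finset.mem_filter.1 hs').2
        rw [nonpos_iff_eq_zero.1 (not_lt.1 htrue), add_zero] at hs'
        exact hs'.ne'
      simpa [htrue] using h (s', false) hfalse

lemma le_budgetOp_s1 [Fintype S] [Fintype A] (k : S → A → ℕ∞) {s : S} {a : A} {x : S × Bool}
    (hx : p s a x ≠ 0) : (if x.2 then 1 else 0) + Finset.univ.inf (k x.1) ≤ budgetOp p k s a :=
  (budgetOp_le_iff p k s a _).1 le_rfl x hx

lemma budgetOp_minBudget_le [Fintype S] [Fintype A] [Nonempty A] (s : S) (a : A) :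
    budgetOp p (minBudget p) s a ≤ minBudget p s a := by
  refine (budgetOp_le_iff p _ s a _).2 fun x hx => ?_
  obtain ⟨π, hπ⟩ := exists_safeAS_minBudget p s a
  calc (if x.2 then 1 else 0) + Finset.univ.inf (minBudget p x.1)
      ≤ (if x.2 then 1 else 0) + minBudget p x.1 (π x.1) := by
        gcongr; exact Finset.inf_le (Finset.mem_univ _)
    _ ≤ (if x.2 then 1 else 0) + (minBudget p s a - if x.2 then 1 else 0) := by
        gcongr; exact minBudget_le_of_safeAS p (hπ.tail hx)
    _ = minBudget p s a := add_tsub_cancel_of_le (hπ.damage_le hx)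

lemma minBudget_le_budgetOp [Fintype S] [Fintype A] [Nonempty A] (s : S) (a : A) :
    minBudget p s a ≤ budgetOp p (minBudget p) s a := by
  obtain ⟨π, hπ⟩ := exists_policy_minBudget_eq_inf p
  suffices greedy_safe : ∀ l s a, pathProb p π s a l ≠ 0 →
      (pathDamage l : ℕ∞) ≤ budgetOp p (minBudget p) s a from
    minBudget_le_of_safeAS p fun l => greedy_safe l s a
  intro l
  induction l with
  | nil => simp [pathDamage]
  | cons x l ih =>
    intro s a hl
    obtain ⟨hx, hl⟩ := pathProb_cons_ne_zero.1 hl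
    have tail_le : (pathDamage l : ℕ∞) ≤ Finset.univ.inf (minBudget p x.1) :=
      calc (pathDamage l : ℕ∞) ≤ budgetOp p (minBudget p) x.1 (π x.1) := ih _ _ hl
        _ ≤ minBudget p x.1 (π x.1) := budgetOp_minBudget_le p _ _
        _ = Finset.univ.inf (minBudget p x.1) := hπ x.1
    rw [pathDamage_cons]
    exact (add_le_add le_rfl tail_le).trans (le_budgetOp_s1 p _ hx)

end

theorem minBudget_recursion_general
    [Fintype S] [Fintype A] [Nonempty A]
    (p : S → A → PMF (S × Bool)) :
    (∀ s a, minBudget p s a =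
      (Finset.univ.filter fun s' : S => 0 < p s a (s', false) + p s a (s', true)).sup
        fun s' => (if 0 < p s a (s', true) then 1 else 0) +
          Finset.univ.inf fun a' => minBudget p s' a') ∧
    budgetOp p (minBudget p) = minBudget p := by
  have fixed : budgetOp p (minBudget p) = minBudget p := funext₂ fun s a =>
    le_antisymm (budgetOp_minBudget_le p s a) (minBudget_le_budgetOp p s a)
  exact ⟨fun s a => (congrFun₂ fixed s a).symm, fixed⟩

/-- the minimal budget satisfies the Bellman-like recursion
`k_*(s,a) = max_{s' : p(s'|s,a)>0} [ 1{p(s',1|s,a)>0} + min_{a'} k_*(s',a') ]`,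
i.e. `T_p k_* = k_*`. -/
theorem minBudget_recursion
    [Fintype S] [Nonempty S] [Fintype A] [Nonempty A]
    (p : S → A → PMF (S × Bool)) :
    (∀ s a, minBudget p s a =
      (Finset.univ.filter fun s' : S => 0 < p s a (s', false) + p s a (s', true)).sup
        fun s' => (if 0 < p s a (s', true) then 1 else 0) +
          Finset.univ.inf fun a' => minBudget p s' a') ∧
    budgetOp p (minBudget p) = minBudget p :=
  minBudget_recursion_general p
end

section
/- Let S and A be nonempty finite sets and let p be a transition kernel as defined. Let k_∞(s,a) = sup_{n∈ℕ} (T_p^n(0))(s,a). Then for every stationary deterministic policy π : S → A, every (s,a) ∈ S × A and every k ∈ ℕ ∪ {∞}: if P_{s,a,π}( D ≤ k ) = 1, then k_∞(s,a) ≤ k. In particular, k_∞(s,a) is a lower bound on the budget achievable by any stationary deterministic policy from (s,a). -/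
open scoped Classical ENNReal

variable {S A : Type*}

lemma iter_le_of_safe [Fintype S] [Fintype A] [Nonempty A]
    (p : S → A → PMF (S × Bool)) (n : ℕ) :
    ∀ (π : S → A) (s : S) (a : A) (k : ℕ∞),
      SafeAS p π s a k → (budgetOp p)^[n] (fun _ _ => 0) s a ≤ k := by
  induction n with
  | zero => intro π s a k _; simp
  | succ n ih =>
    intro π s a k hsafe
    rw [Function.iterate_succ_apply']
    unfold budgetOp
    apply Finset.sup_le
    intro s' hs'
    rw [Finset.mem_filter] at hs'
    have htot : p s a (s', false) + p s a (s', true) ≠ 0 := ne_of_gt hs'.2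
    by_cases ht : 0 < p s a (s', true)
    · -- damage possible
      have h1k : (1 : ℕ∞) ≤ k := by
        have := hsafe [(s', true)] (by
          simp [pathProb, ne_of_gt ht])
        simpa [pathDamage] using this
      have hsafe' : SafeAS p π s' (π s') (k - 1) := by
        intro l hl
        have hcons : pathProb p π s a ((s', true) :: l) ≠ 0 := by
          simp only [pathProb]
          exact mul_ne_zero (ne_of_gt ht) hl
        have := hsafe _ hcons
        have hd : pathDamage ((s', true) :: l) = 1 + pathDamage l := by
          simp [pathDamage]
        rw [hd] at this
        push_cast at this
        rw [add_comm] at this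
        exact (ENat.addLECancellable_of_ne_top (by simp)).le_tsub_of_add_le_right this
      have hinf : (Finset.univ.inf fun a' => (budgetOp p)^[n] (fun _ _ => 0) s' a') ≤ k - 1 :=
        le_trans (Finset.inf_le (Finset.mem_univ (π s'))) (ih π s' (π s') (k - 1) hsafe')
      simp only [if_pos ht]
      calc 1 + (Finset.univ.inf fun a' => (budgetOp p)^[n] (fun _ _ => 0) s' a')
          ≤ 1 + (k - 1) := by exact add_le_add_right hinf 1
        _ = k := add_tsub_cancel_of_le h1k
    · have ht0 : p s a (s', true) = 0 := by
        simpa [pos_iff_ne_zero, not_not] using ht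
      have hf : p s a (s', false) ≠ 0 := by
        intro h; exact htot (by rw [h, ht0, add_zero])
      have hsafe' : SafeAS p π s' (π s') k := by
        intro l hl
        have hcons : pathProb p π s a ((s', false) :: l) ≠ 0 := by
          simp only [pathProb]
          exact mul_ne_zero hf hl
        have := hsafe _ hcons
        have hd : pathDamage ((s', false) :: l) = pathDamage l := by
          simp [pathDamage]
        rwa [hd] at this
      simp only [if_neg ht, zero_add]
      exact le_trans (Finset.inf_le (Finset.mem_univ (π s'))) (ih π s' (π s') k hsafe')

/-- `k_∞ = sup_n T_p^n(0)` is a lower bound on any budget achievable with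
probability one by a stationary deterministic policy: if `P_{s,a,π}(D ≤ k) = 1` then
`k_∞(s,a) ≤ k`. -/
theorem kInfty_le_of_safe
    [Fintype S] [Nonempty S] [Fintype A] [Nonempty A]
    (p : S → A → PMF (S × Bool)) :
    ∀ (π : S → A) (s : S) (a : A) (k : ℕ∞),
      SafeAS p π s a k →
        (⨆ n : ℕ, (budgetOp p)^[n] (fun _ _ => 0) s a) ≤ k := by
  intro π s a k hsafe
  exact iSup_le fun n => iter_le_of_safe p n π s a k hsafe
end

section
/- Let S and A be nonempty finite sets and let p be a transition kernel as defined. Let 0 < μ ≤ 1 and 0 < δ < 1, and assume that for every (s,a,s',d) ∈ S × A × S × {0,1} either p(s',d|s,a) = 0 or p(s',d|s,a) ≥ μ. Let N be a natural number with N ≥ (1/μ) · log( 2|S|²|A| / δ ). Then, under the sampling measure P (N i.i.d. samples from p(·,·|s,a) drawn independently for each (s,a)), with probability at least 1 − δ the realization produces a consistent kernel, i.e. P( for every (s,a,s',d) with p(s',d|s,a) > 0, the outcome (s',d) appears among the N samples drawn at (s,a) ) ≥ 1 − δ. -/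
open scoped ENNReal
open MeasureTheory

private lemma kbsc_aux {S A : Type*} [Fintype S] [Fintype A]
    [MeasurableSpace S] [MeasurableSingletonClass S]
    (p : S → A → PMF (S × Bool)) (N : ℕ) (s : S) (a : A) (v : S × Bool) :
    (Measure.pi fun sa : S × A => Measure.pi fun _ : Fin N => (p sa.1 sa.2).toMeasure)
      {ω | ∀ i : Fin N, ω (s,a) i ≠ v} = (1 - p s a v) ^ N := by
  classical
  have hset : {ω : S × A → Fin N → S × Bool | ∀ i : Fin N, ω (s,a) i ≠ v}
      = Set.pi Set.univ (fun sa => if sa = (s,a) then {f : Fin N → S × Bool | ∀ i, f i ≠ v} else Set.univ) := by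
    ext ω
    simp only [Set.mem_setOf_eq, Set.mem_pi, Set.mem_univ, forall_true_left]
    constructor
    · intro h sa
      by_cases hsa : sa = (s,a) <;> simp [hsa, h]
    · intro h
      have := h (s,a); simpa using this
  rw [hset, Measure.pi_pi]
  rw [Finset.prod_eq_single (s,a) ?_ ?_]
  · simp only [if_pos rfl]
    have hinner : {f : Fin N → S × Bool | ∀ i, f i ≠ v}
        = Set.pi Set.univ (fun _ : Fin N => ({v}ᶜ : Set (S × Bool))) := by
      ext f; simp
    rw [hinner]
    simp only [if_true]
    rw [Measure.pi_pi]
    simp only [Finset.prod_const, Finset.card_univ, Fintype.card_fin]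
    congr 1
    rw [measure_compl (measurableSet_singleton v) (measure_ne_top _ _)]
    simp [PMF.toMeasure_apply_singleton _ _ (measurableSet_singleton v)]
  · intro b _ hb; simp [hb]
  · intro h; exact absurd (Finset.mem_univ _) h

private lemma kbsc_real (μ δ C : ℝ) (hμ0 : 0 < μ) (hμ1 : μ ≤ 1) (hδ0 : 0 < δ) (hC : 0 < C)
    (N : ℕ) (hN : (N : ℝ) ≥ (1/μ) * Real.log (C / δ)) :
    C * (1 - μ)^N ≤ δ := by
  have h1 : (1 - μ : ℝ) ≤ Real.exp (-μ) := by
    have := Real.add_one_le_exp (-μ); linarith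
  have h2 : (1 - μ : ℝ)^N ≤ Real.exp (-μ * N) := by
    calc (1-μ:ℝ)^N ≤ (Real.exp (-μ))^N := pow_le_pow_left₀ (by linarith) h1 N
    _ = Real.exp (-μ * N) := by rw [← Real.exp_nat_mul]; ring_nf
  have h3 : Real.log (C/δ) ≤ μ * N := by
    calc Real.log (C/δ) = μ * ((1/μ) * Real.log (C/δ)) := by field_simp
    _ ≤ μ * N := mul_le_mul_of_nonneg_left hN (le_of_lt hμ0)
  have h4 : Real.exp (-μ*N) ≤ δ / C := by
    rw [show (-μ*(N:ℝ)) = -(μ*N) by ring]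
    have hel : Real.exp (Real.log (C/δ)) = C/δ := Real.exp_log (by positivity)
    calc Real.exp (-(μ*N)) ≤ Real.exp (-(Real.log (C/δ))) :=
      Real.exp_le_exp.mpr (by linarith)
    _ = (C/δ)⁻¹ := by rw [Real.exp_neg, hel]
    _ = δ / C := by field_simp
  calc C * (1-μ)^N ≤ C * Real.exp (-μ*N) := mul_le_mul_of_nonneg_left h2 hC.le
  _ ≤ C * (δ/C) := mul_le_mul_of_nonneg_left h4 hC.le
  _ = δ := by field_simp

/-- sample complexity of the kernel builder.  Drawing `N` i.i.d. samples from
`p(·,·|s,a)` independently for each `(s,a)` (the product measure below), if every nonzero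
transition probability is at least `μ` and `N ≥ (1/μ)·log(2|S|²|A|/δ)`, then with
probability at least `1−δ` every positive-probability outcome `(s',d)` appears among the
`N` samples drawn at `(s,a)`, i.e. the realization produces a consistent kernel. -/
theorem kernel_builder_sample_complexity
    {S A : Type*} [Fintype S] [Nonempty S] [Fintype A] [Nonempty A]
    [MeasurableSpace S] [MeasurableSingletonClass S]
    (p : S → A → PMF (S × Bool)) (μ δ : ℝ) (hμ0 : 0 < μ) (hμ1 : μ ≤ 1)
    (hδ0 : 0 < δ) (hδ1 : δ < 1)
    (hlow : ∀ (s : S) (a : A) (s' : S) (d : Bool),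
      p s a (s', d) = 0 ∨ ENNReal.ofReal μ ≤ p s a (s', d))
    (N : ℕ)
    (hN : (N : ℝ) ≥ (1 / μ) *
      Real.log (2 * (Fintype.card S : ℝ) ^ 2 * (Fintype.card A : ℝ) / δ)) :
    (Measure.pi fun sa : S × A => Measure.pi fun _ : Fin N => (p sa.1 sa.2).toMeasure)
      {ω | ∀ (s : S) (a : A) (s' : S) (d : Bool),
        p s a (s', d) ≠ 0 → ∃ i : Fin N, ω (s, a) i = (s', d)}
      ≥ 1 - ENNReal.ofReal δ := by
  classical
  set P : Measure ((S × A) → Fin N → S × Bool) :=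
    Measure.pi fun sa : S × A => Measure.pi fun _ : Fin N => (p sa.1 sa.2).toMeasure with hP
  set G : Set ((S × A) → Fin N → S × Bool) :=
    {ω | ∀ (s : S) (a : A) (s' : S) (d : Bool),
        p s a (s', d) ≠ 0 → ∃ i : Fin N, ω (s, a) i = (s', d)} with hG
  have hprob : IsProbabilityMeasure P := by rw [hP]; infer_instance
  -- bound each bad event
  have hbound : ∀ (t : (S × A) × (S × Bool)),
      P {ω | p t.1.1 t.1.2 t.2 ≠ 0 ∧ ∀ i : Fin N, ω t.1 i ≠ t.2}
        ≤ ENNReal.ofReal ((1 - μ)^N) := by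
    rintro ⟨⟨s, a⟩, s', d⟩
    by_cases h0 : p s a (s', d) = 0
    · have : {ω : (S × A) → Fin N → S × Bool |
          p s a (s', d) ≠ 0 ∧ ∀ i : Fin N, ω (s,a) i ≠ (s',d)} = ∅ := by
        ext ω; simp [h0]
      simp only [this, measure_empty]; exact zero_le
    · have hsub : {ω : (S × A) → Fin N → S × Bool |
          p s a (s', d) ≠ 0 ∧ ∀ i : Fin N, ω (s,a) i ≠ (s',d)}
          ⊆ {ω | ∀ i : Fin N, ω (s,a) i ≠ (s',d)} := fun ω hω => hω.2
      refine (measure_mono hsub).trans ?_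
      rw [hP, kbsc_aux p N s a (s', d)]
      have hge : ENNReal.ofReal μ ≤ p s a (s', d) := (hlow s a s' d).resolve_left h0
      have h1 : (1 : ℝ≥0∞) - p s a (s', d) ≤ 1 - ENNReal.ofReal μ :=
        tsub_le_tsub_left hge 1
      have h2 : (1 : ℝ≥0∞) - ENNReal.ofReal μ = ENNReal.ofReal (1 - μ) := by
        rw [ENNReal.ofReal_sub _ hμ0.le, ENNReal.ofReal_one]
      calc (1 - p s a (s', d))^N ≤ (1 - ENNReal.ofReal μ)^N := pow_le_pow_left' h1 N
      _ = ENNReal.ofReal ((1 - μ)^N) := by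
          rw [h2, ← ENNReal.ofReal_pow (by linarith)]
  -- union bound
  have hGc : Gᶜ ⊆ ⋃ t : (S × A) × (S × Bool),
      {ω | p t.1.1 t.1.2 t.2 ≠ 0 ∧ ∀ i : Fin N, ω t.1 i ≠ t.2} := by
    intro ω hω
    simp only [hG, Set.mem_compl_iff, Set.mem_setOf_eq, not_forall] at hω
    obtain ⟨s, a, s', d, hne, hno⟩ := hω
    push_neg at hno
    exact Set.mem_iUnion.mpr ⟨((s,a),(s',d)), hne, hno⟩
  have hcard : (Fintype.card ((S × A) × (S × Bool)) : ℝ)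
      = 2 * (Fintype.card S : ℝ)^2 * (Fintype.card A : ℝ) := by
    simp [Fintype.card_prod]; ring
  have hCpos : (0:ℝ) < 2 * (Fintype.card S : ℝ)^2 * (Fintype.card A : ℝ) := by
    have := Fintype.card_pos (α := S); have := Fintype.card_pos (α := A); positivity
  have hreal : (Fintype.card ((S × A) × (S × Bool)) : ℝ) * (1 - μ)^N ≤ δ := by
    rw [hcard]; exact kbsc_real μ δ _ hμ0 hμ1 hδ0 hCpos N hN
  have hbad : P Gᶜ ≤ ENNReal.ofReal δ := by
    calc P Gᶜ ≤ ∑ t : (S × A) × (S × Bool),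
        P {ω | p t.1.1 t.1.2 t.2 ≠ 0 ∧ ∀ i : Fin N, ω t.1 i ≠ t.2} :=
      (measure_mono hGc).trans (measure_iUnion_fintype_le _ _)
    _ ≤ ∑ _t : (S × A) × (S × Bool), ENNReal.ofReal ((1 - μ)^N) :=
      Finset.sum_le_sum fun t _ => hbound t
    _ = (Fintype.card ((S × A) × (S × Bool)) : ℝ≥0∞) * ENNReal.ofReal ((1 - μ)^N) := by
      simp [Finset.sum_const, Finset.card_univ, nsmul_eq_mul]
    _ = ENNReal.ofReal ((Fintype.card ((S × A) × (S × Bool)) : ℝ) * (1 - μ)^N) := by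
      rw [ENNReal.ofReal_mul (by positivity), ENNReal.ofReal_natCast]
    _ ≤ ENNReal.ofReal δ := ENNReal.ofReal_le_ofReal hreal
  rw [ge_iff_le, tsub_le_iff_right]
  calc (1 : ℝ≥0∞) = P Set.univ := (measure_univ (μ := P)).symm
  _ = P (G ∪ Gᶜ) := by rw [Set.union_compl_self]
  _ ≤ P G + P Gᶜ := measure_union_le G Gᶜ
  _ ≤ P G + ENNReal.ofReal δ := add_le_add_right hbad _
end

section
/- Let S and A be nonempty finite sets and let p be a transition kernel as defined. Let 0 < μ ≤ 1 and assume that for every (s,a,s',d) ∈ S × A × S × {0,1} either p(s',d|s,a) = 0 or p(s',d|s,a) ≥ μ. Then for every natural number N, under the sampling measure P, the probability that the realization fails to produce a consistent kernel is at most 2|S|²|A| · (1 − μ)^N. -/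
open scoped ENNReal
open MeasureTheory Set

/-! Union bound over the `2|S|²|A|` tuples `(s, a, s', d)`: by independence, an outcome of
probability at least `μ` is missed by all `N` samples at `(s, a)` with probability at most
`(1 - μ)^N`. -/

lemma PMF.toMeasure_compl_singleton_le {α : Type*} [MeasurableSpace α]
    [MeasurableSingletonClass α] (q : PMF α) {x : α} {ε : ℝ≥0∞} (h : ε ≤ q x) :
    q.toMeasure {x}ᶜ ≤ 1 - ε := by
  rw [prob_compl_eq_one_sub (measurableSet_singleton x),
    q.toMeasure_apply_singleton x (measurableSet_singleton x)]
  exact tsub_le_tsub_left h 1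

lemma measure_pi_pi_forall_ne {ι κ α : Type*} [Fintype ι] [Fintype κ] [MeasurableSpace α]
    [MeasurableSingletonClass α] (ν : ι → Measure α) [∀ j, IsProbabilityMeasure (ν j)]
    (j : ι) (x : α) :
    (Measure.pi fun j => Measure.pi fun _ : κ => ν j) {ω | ∀ i, ω j i ≠ x}
      = ν j {x}ᶜ ^ Fintype.card κ := by
  have hset : {ω : ι → κ → α | ∀ i, ω j i ≠ x}
      = Function.eval j ⁻¹' univ.pi fun _ => {x}ᶜ := by
    ext ω
    simp
  rw [hset, (measurePreserving_eval _ j).measure_preimage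
      (MeasurableSet.univ_pi fun _ => (measurableSet_singleton x).compl).nullMeasurableSet,
    Measure.pi_pi, Finset.prod_const, Finset.card_univ]

lemma PMF.measure_pi_pi_forall_ne_le {ι κ α : Type*} [Fintype ι] [Fintype κ]
    [MeasurableSpace α] [MeasurableSingletonClass α] (q : ι → PMF α) {j : ι} {x : α}
    {ε : ℝ≥0∞} (h : ε ≤ q j x) :
    (Measure.pi fun j => Measure.pi fun _ : κ => (q j).toMeasure) {ω | ∀ i, ω j i ≠ x}
      ≤ (1 - ε) ^ Fintype.card κ := by
  rw [measure_pi_pi_forall_ne]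
  exact pow_le_pow_left' ((q j).toMeasure_compl_singleton_le h) _

theorem kernel_builder_failure_bound_general
    {S A : Type*} [Fintype S] [Fintype A]
    [MeasurableSpace S] [MeasurableSingletonClass S]
    (p : S → A → PMF (S × Bool)) (μ : ℝ) (hμ0 : 0 < μ) (hμ1 : μ ≤ 1)
    (hlow : ∀ (s : S) (a : A) (s' : S) (d : Bool),
      p s a (s', d) = 0 ∨ ENNReal.ofReal μ ≤ p s a (s', d))
    (N : ℕ) :
    (Measure.pi fun sa : S × A => Measure.pi fun _ : Fin N => (p sa.1 sa.2).toMeasure)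
      {ω | ¬ ∀ (s : S) (a : A) (s' : S) (d : Bool),
        p s a (s', d) ≠ 0 → ∃ i : Fin N, ω (s, a) i = (s', d)}
      ≤ ENNReal.ofReal
        (2 * (Fintype.card S : ℝ) ^ 2 * (Fintype.card A : ℝ) * (1 - μ) ^ N) := by
  set ν := Measure.pi fun sa : S × A => Measure.pi fun _ : Fin N => (p sa.1 sa.2).toMeasure
  let miss : (S × A) × (S × Bool) → Set (S × A → Fin N → S × Bool) :=
    fun k => {ω | p k.1.1 k.1.2 k.2 ≠ 0 ∧ ∀ i, ω k.1 i ≠ k.2}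
  have hfail : {ω : S × A → Fin N → S × Bool | ¬ ∀ (s : S) (a : A) (s' : S) (d : Bool),
      p s a (s', d) ≠ 0 → ∃ i : Fin N, ω (s, a) i = (s', d)} ⊆ ⋃ k, miss k := by
    intro ω hω
    push Not at hω
    obtain ⟨s, a, s', d, hpos, hnot⟩ := hω
    exact mem_iUnion.2 ⟨((s, a), (s', d)), hpos, hnot⟩
  have hmiss (k : (S × A) × (S × Bool)) : ν (miss k) ≤ (1 - ENNReal.ofReal μ) ^ N := by
    rcases hlow k.1.1 k.1.2 k.2.1 k.2.2 with hzero | hge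
    · simp [miss, hzero]
    · calc ν (miss k) ≤ ν {ω | ∀ i, ω k.1 i ≠ k.2} := measure_mono fun _ hω => hω.2
        _ ≤ (1 - ENNReal.ofReal μ) ^ Fintype.card (Fin N) :=
          PMF.measure_pi_pi_forall_ne_le (fun sa : S × A => p sa.1 sa.2) hge
        _ = (1 - ENNReal.ofReal μ) ^ N := by rw [Fintype.card_fin]
  calc ν _ ≤ ∑ k, ν (miss k) := (measure_mono hfail).trans (measure_iUnion_fintype_le ν miss)
    _ ≤ ∑ _k : (S × A) × (S × Bool), (1 - ENNReal.ofReal μ) ^ N :=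
      Finset.sum_le_sum fun k _ => hmiss k
    _ = ENNReal.ofReal
        (2 * (Fintype.card S : ℝ) ^ 2 * (Fintype.card A : ℝ) * (1 - μ) ^ N) := by
      rw [← ENNReal.ofReal_one, ← ENNReal.ofReal_sub _ hμ0.le,
        ← ENNReal.ofReal_pow (sub_nonneg.2 hμ1), Finset.sum_const, nsmul_eq_mul,
        ← ENNReal.ofReal_natCast, ← ENNReal.ofReal_mul (Nat.cast_nonneg _)]
      congr 1
      simp only [Finset.card_univ, Fintype.card_prod, Fintype.card_bool]
      push_cast
      ring

/-- under the sampling measure (`N` i.i.d. samples from `p(·,·|s,a)` drawn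
independently for each `(s,a)`), if every nonzero transition probability is at least `μ`,
the probability of failing to produce a consistent kernel (i.e. some positive-probability
outcome `(s',d)` never appears among the `N` samples drawn at `(s,a)`) is at most
`2|S|²|A|·(1−μ)^N`. -/
theorem kernel_builder_failure_bound
    {S A : Type*} [Fintype S] [Nonempty S] [Fintype A] [Nonempty A]
    [MeasurableSpace S] [MeasurableSingletonClass S]
    (p : S → A → PMF (S × Bool)) (μ : ℝ) (hμ0 : 0 < μ) (hμ1 : μ ≤ 1)
    (hlow : ∀ (s : S) (a : A) (s' : S) (d : Bool),
      p s a (s', d) = 0 ∨ ENNReal.ofReal μ ≤ p s a (s', d))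
    (N : ℕ) :
    (Measure.pi fun sa : S × A => Measure.pi fun _ : Fin N => (p sa.1 sa.2).toMeasure)
      {ω | ¬ ∀ (s : S) (a : A) (s' : S) (d : Bool),
        p s a (s', d) ≠ 0 → ∃ i : Fin N, ω (s, a) i = (s', d)}
      ≤ ENNReal.ofReal
        (2 * (Fintype.card S : ℝ) ^ 2 * (Fintype.card A : ℝ) * (1 - μ) ^ N) :=
  kernel_builder_failure_bound_general p μ hμ0 hμ1 hlow N
end
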